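/- Let S be a set of positive integers and suppose there exists a trigonometric polynomial T(x) = a₀ + Σ_{d∈S∩[1,n]} a_d cos(2πdx) with T(0) = 1 and T(x) ≥ 0 for all x. If A is a set of integers whose difference set A−A contains no element of S∩[1,n], then the upper Banach density of A is at most a₀. -/

import Mathlib

/-!
Sample the trigonometric polynomial `T` at the `M`-th roots of unity, with `M = N + n + 1` large
enough that no difference `b - b' ± d` with `b, b' ∈ A ∩ [1, N]` and `d ≤ n` wraps around modulo
`M`. For `F(j) = ∑_{b} e(bj/M)`, orthogonality of characters of `ZMod M` gives
`∑_j T(j/M) |F(j)|² = M a₀ |A ∩ [1, N]|`, because `A - A` avoids the frequencies of `T`.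
Every term is nonnegative and the term `j = 0` alone is `T(0) |A ∩ [1, N]|² = |A ∩ [1, N]|²`,
so `|A ∩ [1, N]| ≤ (N + n + 1) a₀`.
-/

open Finset Filter Real ZMod Topology

noncomputable def cosPoly (D : Finset ℕ) (a₀ : ℝ) (a : ℕ → ℝ) (x : ℝ) : ℝ :=
  a₀ + ∑ d ∈ D, a d * cos (2 * π * d * x)

section

variable {M : ℕ} [NeZero M]

lemma ofReal_cos_eq_stdAddChar (d : ℕ) (j : ZMod M) :
    (cos (2 * π * d * (j.val / M)) : ℂ) =
      (stdAddChar (j * (d : ZMod M)) + stdAddChar (-(j * (d : ZMod M)))) / 2 := by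
  have hjd : j * (d : ZMod M) = ((j.val * d : ℤ) : ZMod M) := by push_cast; simp
  rw [hjd, ← Int.cast_neg, stdAddChar_coe, stdAddChar_coe, Complex.ofReal_cos, Complex.cos]
  congr 3 <;> push_cast <;> ring

lemma sum_cosPoly_mul_stdAddChar (D : Finset ℕ) (a₀ : ℝ) (a : ℕ → ℝ) (x : ZMod M)
    (hx : ∀ d ∈ D, x + d ≠ 0 ∧ x - d ≠ 0) :
    ∑ j : ZMod M, (cosPoly D a₀ a (j.val / M) : ℂ) * stdAddChar (j * x) =
      if x = 0 then (M * a₀ : ℂ) else 0 := by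
  have hexpand : ∀ j : ZMod M, (cosPoly D a₀ a (j.val / M) : ℂ) * stdAddChar (j * x) =
      a₀ * stdAddChar (j * x) + ∑ d ∈ D, a d / 2 *
        (stdAddChar (j * (x + (d : ZMod M))) + stdAddChar (j * (x - (d : ZMod M)))) := by
    intro j
    simp only [cosPoly, Complex.ofReal_add, Complex.ofReal_sum, Complex.ofReal_mul,
      ofReal_cos_eq_stdAddChar, add_mul, sum_mul, mul_add, sub_eq_add_neg, mul_neg,
      AddChar.map_add_eq_mul]
    congr 1
    refine sum_congr rfl fun d _ => ?_
    ring
  simp only [hexpand, sum_add_distrib, ← mul_sum]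
  rw [sum_comm]
  simp only [← mul_sum, sum_add_distrib, AddChar.sum_mulShift _ (isPrimitive_stdAddChar M)]
  rw [sum_eq_zero fun d hd => by simp [(hx d hd).1, (hx d hd).2]]
  split_ifs <;> simp [mul_comm]

lemma sum_cosPoly_mul_normSq (D : Finset ℕ) (a₀ : ℝ) (a : ℕ → ℝ) (B : Finset (ZMod M))
    (hB : ∀ b ∈ B, ∀ b' ∈ B, ∀ d ∈ D, b ≠ b' + d) :
    ∑ j : ZMod M, cosPoly D a₀ a (j.val / M) * Complex.normSq (∑ b ∈ B, stdAddChar (j * b)) =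
      M * a₀ * #B := by
  have hnormSq : ∀ j : ZMod M, (Complex.normSq (∑ b ∈ B, stdAddChar (j * b)) : ℂ) =
      ∑ b ∈ B, ∑ b' ∈ B, stdAddChar (j * (b - b')) := by
    intro j
    rw [← Complex.mul_conj, map_sum, sum_mul_sum]
    simp only [← AddChar.map_neg_eq_conj, ← AddChar.map_add_eq_mul, sub_eq_add_neg, mul_add,
      mul_neg]
  have hdiff : ∀ b ∈ B, ∀ b' ∈ B, ∀ d ∈ D, b - b' + d ≠ 0 ∧ b - b' - d ≠ 0 := by
    intro b hb b' hb' d hd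
    constructor
    · intro h
      exact hB b' hb' b hb d hd (by linear_combination -h)
    · intro h
      exact hB b hb b' hb' d hd (by linear_combination h)
  apply Complex.ofReal_injective
  calc _ = ∑ b ∈ B, ∑ b' ∈ B, ∑ j : ZMod M,
        (cosPoly D a₀ a (j.val / M) : ℂ) * stdAddChar (j * (b - b')) := by
        push_cast
        simp only [hnormSq, mul_sum]
        rw [sum_comm]
        exact sum_congr rfl fun b _ => sum_comm
    _ = ∑ b ∈ B, ∑ b' ∈ B, if b = b' then (M * a₀ : ℂ) else 0 := by
        refine sum_congr rfl fun b hb => sum_congr rfl fun b' hb' => ?_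
        simp only [sum_cosPoly_mul_stdAddChar D a₀ a _ (hdiff b hb b' hb'), sub_eq_zero]
    _ = _ := by simp [mul_comm]

lemma card_sq_le_mul_card (D : Finset ℕ) (a₀ : ℝ) (a : ℕ → ℝ) (hT0 : cosPoly D a₀ a 0 = 1)
    (hT : ∀ j : ZMod M, 0 ≤ cosPoly D a₀ a (j.val / M)) (B : Finset (ZMod M))
    (hB : ∀ b ∈ B, ∀ b' ∈ B, ∀ d ∈ D, b ≠ b' + d) :
    (#B : ℝ) ^ 2 ≤ M * a₀ * #B := by
  calc (#B : ℝ) ^ 2 = cosPoly D a₀ a ((0 : ZMod M).val / M) *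
        Complex.normSq (∑ b ∈ B, stdAddChar ((0 : ZMod M) * b)) := by
        simp [hT0, Complex.normSq_natCast, sq]
    _ ≤ ∑ j : ZMod M, cosPoly D a₀ a (j.val / M) *
        Complex.normSq (∑ b ∈ B, stdAddChar (j * b)) :=
        single_le_sum (f := fun j : ZMod M => cosPoly D a₀ a (j.val / M) *
          Complex.normSq (∑ b ∈ B, stdAddChar (j * b)))
          (fun j _ => mul_nonneg (hT j) (Complex.normSq_nonneg _)) (mem_univ 0)
    _ = M * a₀ * #B := sum_cosPoly_mul_normSq D a₀ a B hB

theorem card_le_mul_of_forall_ne_add (D : Finset ℕ) (a₀ : ℝ) (a : ℕ → ℝ)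
    (hT0 : cosPoly D a₀ a 0 = 1) (hT : ∀ j : ZMod M, 0 ≤ cosPoly D a₀ a (j.val / M))
    (hD : ∀ d ∈ D, (d : ZMod M) ≠ 0) (B : Finset (ZMod M))
    (hB : ∀ b ∈ B, ∀ b' ∈ B, ∀ d ∈ D, b ≠ b' + d) :
    (#B : ℝ) ≤ M * a₀ := by
  rcases B.eq_empty_or_nonempty with rfl | hBne
  · -- the singleton `{0}` yields `1 ≤ M * a₀`
    have h0 := card_sq_le_mul_card D a₀ a hT0 hT {0} (by simpa [eq_comm] using hD)
    simp only [card_singleton, Nat.cast_one, one_pow, mul_one] at h0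
    simpa using zero_le_one.trans h0
  · have hpos : (0 : ℝ) < #B := by exact_mod_cast hBne.card_pos
    nlinarith [card_sq_le_mul_card D a₀ a hT0 hT B hB]

end

theorem card_le_mul_of_forall_le (D : Finset ℕ) (a₀ : ℝ) (a : ℕ → ℝ)
    (hT0 : cosPoly D a₀ a 0 = 1) (hT : ∀ x, 0 ≤ cosPoly D a₀ a x) (n N : ℕ) (hD : D ⊆ Icc 1 n)
    (B : Finset ℕ) (hBN : ∀ b ∈ B, b ≤ N) (hB : ∀ b ∈ B, ∀ b' ∈ B, ∀ d ∈ D, b ≠ b' + d) :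
    (#B : ℝ) ≤ (N + n + 1) * a₀ := by
  have hcast : ∀ k l : ℕ, k ≤ N + n → l ≤ N + n → (k : ZMod (N + n + 1)) = l → k = l := by
    intro k l hk hl h
    simpa [ZMod.val_natCast_of_lt (by omega : k < N + n + 1),
      ZMod.val_natCast_of_lt (by omega : l < N + n + 1)] using congrArg ZMod.val h
  have hDle : ∀ d ∈ D, 1 ≤ d ∧ d ≤ n := fun d hd => mem_Icc.mp (hD hd)
  have hD0 : ∀ d ∈ D, (d : ZMod (N + n + 1)) ≠ 0 := fun d hd h => by
    have := hcast d 0 (by grind) (by omega) (by simpa using h)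
    grind
  have hB' : ∀ b ∈ B.image Nat.cast, ∀ b' ∈ B.image Nat.cast, ∀ d ∈ D,
      b ≠ b' + (d : ZMod (N + n + 1)) := by
    simp only [mem_image]
    rintro _ ⟨b, hb, rfl⟩ _ ⟨b', hb', rfl⟩ d hd h
    exact hB b hb b' hb' d hd (hcast _ _ (by grind) (by grind) (by simpa using h))
  have hcard : #(B.image (Nat.cast : ℕ → ZMod (N + n + 1))) = #B :=
    card_image_of_injOn fun k hk l hl => hcast k l (by grind) (by grind)
  have := card_le_mul_of_forall_ne_add D a₀ a hT0 (fun _ => hT _) hD0 _ hB'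
  rw [hcard] at this
  exact_mod_cast this

/-- Ruzsa's inequality: if T(x) = a₀ + Σ_{d∈S∩[1,n]} a_d cos(2πdx) is nonnegative
with T(0) = 1, and A − A avoids S∩[1,n], then the upper density of A is ≤ a₀. -/
theorem density_le_a0 (S : Set ℕ) [DecidablePred (· ∈ S)]
    (A : Set ℕ) [DecidablePred (· ∈ A)]
    (n : ℕ) (a₀ : ℝ) (a : ℕ → ℝ)
    (hT0 : a₀ + ∑ d ∈ (Finset.Icc 1 n).filter (· ∈ S), a d = 1)
    (hTpos : ∀ x : ℝ,
      0 ≤ a₀ + ∑ d ∈ (Finset.Icc 1 n).filter (· ∈ S),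
        a d * Real.cos (2 * Real.pi * d * x))
    (hA : ∀ x ∈ A, ∀ y ∈ A, ∀ d ∈ S, 1 ≤ d → d ≤ n → x ≠ y + d) :
    Filter.limsup
      (fun N : ℕ => (((Finset.Icc 1 N).filter (· ∈ A)).card : ℝ) / N)
      Filter.atTop ≤ a₀ := by
  set D := (Icc 1 n).filter (· ∈ S)
  have hcount : ∀ N : ℕ, (#((Icc 1 N).filter (· ∈ A)) : ℝ) ≤ (N + n + 1) * a₀ := by
    intro N
    refine card_le_mul_of_forall_le D a₀ a (by simpa [cosPoly] using hT0) hTpos n N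
      (filter_subset _ _) _ (fun b hb => (mem_Icc.mp (mem_filter.mp hb).1).2) ?_
    simp only [D, mem_filter, mem_Icc]
    exact fun b hb b' hb' d hd => hA b hb.2 b' hb'.2 d hd.2 hd.1.1 hd.1.2
  have hlim : Tendsto (fun N : ℕ => a₀ + (n + 1) * a₀ / N) atTop (𝓝 a₀) := by
    simpa using tendsto_const_nhds.add (tendsto_const_div_atTop_nhds_zero_nat ((n + 1) * a₀))
  refine (limsup_le_limsup ?_ (isCoboundedUnder_le_of_le atTop fun N => by positivity)
    hlim.isBoundedUnder_le).trans_eq hlim.limsup_eq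
  filter_upwards [eventually_gt_atTop 0] with N hN
  rw [div_le_iff₀ (by exact_mod_cast hN)]
  calc _ ≤ (N + n + 1) * a₀ := hcount N
    _ = _ := by field_simp; ring
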